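/- arXiv:1310.4387 — 2 statements merged into one kernel-verified Lean document; each statement's English description precedes it below -/
import Mathlib

section
/- Let B, β_mh, β_hm, μ_h, η_h, μ_m, φ, μ_A, η_A, k, N_h be positive real numbers with φ·η_A ≥ (η_A + μ_A)·μ_m, and let S_m* = (η_A/μ_m)·(1 − (η_A + μ_A)·μ_m/(φ·η_A))·k·N_h. Then the next-generation matrix M = ![![0, B·β_mh/μ_m], ![B·β_hm·S_m*/((η_h + μ_h)·N_h), 0]] (a 2×2 real matrix) has characteristic-polynomial roots exactly ±R_0, and consequently its spectral radius equals R_0, where R_0 = sqrt( k·B²·β_hm·β_mh·(φ·η_A − η_A·μ_m − μ_A·μ_m) / (φ·(η_h + μ_h)·μ_m²) ). -/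
/-! The next-generation matrix has zero diagonal, so its characteristic polynomial is
`X² - ab` with `ab` the product of its off-diagonal entries. Simplifying `S_m*` shows
`ab = R₀²`, and `ab ≥ 0` is exactly the condition `φ η_A ≥ (η_A + μ_A) μ_m`; hence the roots
are `±R₀` and the largest modulus among them is `R₀ ≥ 0`. -/

open Polynomial

theorem Matrix.charpoly_of_zero_diag_fin_two {R : Type*} [CommRing R] [Nontrivial R] (a b : R) :
    (!![0, a; b, 0]).charpoly = X ^ 2 - C (a * b) := by
  simp [Matrix.charpoly_fin_two, Matrix.trace_fin_two, Matrix.det_fin_two, sub_eq_add_neg]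

theorem Polynomial.isRoot_X_sq_sub_C_sq_iff {R : Type*} [CommRing R] [NoZeroDivisors R]
    (r x : R) : (X ^ 2 - C (r ^ 2)).IsRoot x ↔ x = r ∨ x = -r := by
  simp [sub_eq_zero, sq_eq_sq_iff_eq_or_eq_neg]

theorem Polynomial.isGreatest_abs_roots_of_isRoot_iff {R : Type*} [Ring R] [LinearOrder R]
    [IsOrderedRing R] {p : R[X]} {r : R} (hr : 0 ≤ r)
    (hp : ∀ x, p.IsRoot x ↔ x = r ∨ x = -r) :
    IsGreatest {s | ∃ x, p.IsRoot x ∧ s = |x|} r := by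
  refine ⟨⟨r, (hp r).2 (Or.inl rfl), (abs_of_nonneg hr).symm⟩, ?_⟩
  rintro s ⟨x, hx, rfl⟩
  rcases (hp x).1 hx with rfl | rfl <;> simp [abs_of_nonneg hr]

theorem next_generation_offDiag_mul (B βmh βhm μh ηh μm φ μA ηA k Nh : ℝ)
    (hμm : μm ≠ 0) (hφ : φ ≠ 0) (hηA : ηA ≠ 0) (hημ : ηh + μh ≠ 0) (hNh : Nh ≠ 0) :
    B * βmh / μm * (B * βhm * ((ηA / μm) * (1 - (ηA + μA) * μm / (φ * ηA)) * k * Nh) /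
      ((ηh + μh) * Nh)) =
      k * B ^ 2 * βhm * βmh * (φ * ηA - ηA * μm - μA * μm) / (φ * (ηh + μh) * μm ^ 2) := by
  field_simp
  ring

theorem next_generation_matrix_spectral_radius_general
    (B βmh βhm μh ηh μm φ μA ηA k Nh : ℝ)
    (hβmh : 0 < βmh) (hβhm : 0 < βhm) (hμh : 0 < μh)
    (hηh : 0 < ηh) (hμm : 0 < μm) (hφ : 0 < φ)
    (hηA : 0 < ηA) (hk : 0 < k) (hNh : 0 < Nh)
    (hcond : φ * ηA ≥ (ηA + μA) * μm) :
    let Sm : ℝ := (ηA / μm) * (1 - (ηA + μA) * μm / (φ * ηA)) * k * Nh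
    let R0 : ℝ := Real.sqrt (k * B ^ 2 * βhm * βmh *
      (φ * ηA - ηA * μm - μA * μm) / (φ * (ηh + μh) * μm ^ 2))
    let M : Matrix (Fin 2) (Fin 2) ℝ :=
      ![![0, B * βmh / μm], ![B * βhm * Sm / ((ηh + μh) * Nh), 0]]
    (∀ x : ℝ, M.charpoly.IsRoot x ↔ x = R0 ∨ x = -R0) ∧
    IsGreatest {r : ℝ | ∃ x : ℝ, M.charpoly.IsRoot x ∧ r = |x|} R0 := by
  intro Sm R0 M
  have hR0sq : 0 ≤ k * B ^ 2 * βhm * βmh *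
      (φ * ηA - ηA * μm - μA * μm) / (φ * (ηh + μh) * μm ^ 2) := by
    have : 0 ≤ φ * ηA - ηA * μm - μA * μm := by linarith
    positivity
  have hM : M = !![0, B * βmh / μm; B * βhm * Sm / ((ηh + μh) * Nh), 0] := rfl
  have hroots : ∀ x : ℝ, M.charpoly.IsRoot x ↔ x = R0 ∨ x = -R0 := by
    rw [hM, Matrix.charpoly_of_zero_diag_fin_two,
      next_generation_offDiag_mul B βmh βhm μh ηh μm φ μA ηA k Nh hμm.ne' hφ.ne' hηA.ne'
        (by positivity) hNh.ne', ← Real.sq_sqrt hR0sq]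
    exact isRoot_X_sq_sub_C_sq_iff R0
  exact ⟨hroots, isGreatest_abs_roots_of_isRoot_iff (Real.sqrt_nonneg _) hroots⟩

/-- The next-generation matrix of the dengue model without vaccination has
characteristic-polynomial roots exactly `±R₀`, hence spectral radius `R₀`. -/
theorem next_generation_matrix_spectral_radius
    (B βmh βhm μh ηh μm φ μA ηA k Nh : ℝ)
    (hB : 0 < B) (hβmh : 0 < βmh) (hβhm : 0 < βhm) (hμh : 0 < μh)
    (hηh : 0 < ηh) (hμm : 0 < μm) (hφ : 0 < φ) (hμA : 0 < μA)
    (hηA : 0 < ηA) (hk : 0 < k) (hNh : 0 < Nh)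
    (hcond : φ * ηA ≥ (ηA + μA) * μm) :
    let Sm : ℝ := (ηA / μm) * (1 - (ηA + μA) * μm / (φ * ηA)) * k * Nh
    let R0 : ℝ := Real.sqrt (k * B ^ 2 * βhm * βmh *
      (φ * ηA - ηA * μm - μA * μm) / (φ * (ηh + μh) * μm ^ 2))
    let M : Matrix (Fin 2) (Fin 2) ℝ :=
      ![![0, B * βmh / μm], ![B * βhm * Sm / ((ηh + μh) * Nh), 0]]
    (∀ x : ℝ, M.charpoly.IsRoot x ↔ x = R0 ∨ x = -R0) ∧
    IsGreatest {r : ℝ | ∃ x : ℝ, M.charpoly.IsRoot x ∧ r = |x|} R0 :=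
  next_generation_matrix_spectral_radius_general B βmh βhm μh ηh μm φ μA ηA k Nh hβmh hβhm hμh hηh
    hμm hφ hηA hk hNh hcond
end

section
/- Let B, β_mh, β_hm, μ_h, η_h, μ_m, φ, μ_A, η_A, k, N_h be positive real numbers with φ·η_A > (η_A + μ_A)·μ_m, let S_m* = (η_A/μ_m)·(1 − (η_A + μ_A)·μ_m/(φ·η_A))·k·N_h, and let J be the 2×2 real matrix J = ![![−(η_h + μ_h), B·β_mh], ![B·β_hm·S_m*/N_h, −μ_m]] (the linearization of the infected subsystem (I_h, I_m) at the disease-free equilibrium without vaccination). Then trace(J) < 0 always, and det(J) > 0 if and only if R_0 < 1, where R_0 = sqrt( k·B²·β_hm·β_mh·(φ·η_A − η_A·μ_m − μ_A·μ_m) / (φ·(η_h + μ_h)·μ_m²) ). Consequently both roots of the characteristic polynomial of J have negative real part if and only if R_0 < 1. -/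
/-!
The characteristic polynomial of a real `2 × 2` matrix is `X² - (tr J) X + det J`, and its
complex roots lie in the open left half-plane iff `tr J < 0` and `det J > 0` (Routh–Hurwitz in
degree two). Here `tr J = -(ηh + μh) - μm`, and clearing denominators gives
`det J = (ηh + μh) μm (1 - ρ)`, where `ρ` is the radicand defining `R0`; so `det J > 0` iff
`ρ < 1` iff `R0 < 1`.
-/

namespace Complex

theorem re_neg_of_sq_sub_mul_add_eq_zero {t d : ℝ} (ht : t < 0) (hd : 0 < d) {z : ℂ}
    (hz : z ^ 2 - t * z + d = 0) : z.re < 0 := by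
  have hre := congrArg re hz
  have him := congrArg im hz
  simp only [add_re, sub_re, mul_re, ofReal_re, ofReal_im, zero_re, add_im, sub_im, mul_im,
    zero_im, pow_two] at hre him
  have him' : z.im * (2 * z.re - t) = 0 := by linear_combination him
  rcases mul_eq_zero.mp him' with hreal | hcentre
  · -- a real root `x` of `x² - t x + d` with `t < 0 < d` cannot be nonnegative
    rw [hreal] at hre
    nlinarith
  · linarith

theorem neg_and_pos_of_forall_roots_re_neg {t d : ℝ}
    (h : ∀ z : ℂ, z ^ 2 - t * z + d = 0 → z.re < 0) : t < 0 ∧ 0 < d := by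
  obtain ⟨s, hs⟩ := IsAlgClosed.exists_pow_nat_eq ((t : ℂ) ^ 2 - 4 * d) two_pos
  set z₁ : ℂ := (t + s) / 2
  set z₂ : ℂ := t - z₁
  have hz₁ : z₁ ^ 2 - t * z₁ + d = 0 := by linear_combination hs / 4
  have hz₂ : z₂ ^ 2 - t * z₂ + d = 0 := by linear_combination hs / 4
  have hsum : t = z₁.re + z₂.re := by simp [z₂]
  have hprod : d = z₁.re * z₂.re + z₁.im ^ 2 := by
    have := congrArg re (show (d : ℂ) = z₁ * z₂ by linear_combination hz₁)
    simpa [z₂, mul_re, pow_two] using this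
  have h₁ := h z₁ hz₁
  have h₂ := h z₂ hz₂
  exact ⟨by linarith, by nlinarith [sq_nonneg z₁.im]⟩

end Complex

namespace Matrix

theorem isRoot_charpoly_map_ofReal_fin_two_iff (A : Matrix (Fin 2) (Fin 2) ℝ) (z : ℂ) :
    (A.map (fun x : ℝ => (x : ℂ))).charpoly.IsRoot z ↔ z ^ 2 - A.trace * z + A.det = 0 := by
  simp [charpoly_fin_two, trace_fin_two, det_fin_two]

theorem forall_charpoly_roots_re_neg_iff_fin_two (A : Matrix (Fin 2) (Fin 2) ℝ) :
    (∀ z : ℂ, (A.map (fun x : ℝ => (x : ℂ))).charpoly.IsRoot z → z.re < 0) ↔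
      A.trace < 0 ∧ 0 < A.det := by
  simp only [isRoot_charpoly_map_ofReal_fin_two_iff]
  exact ⟨Complex.neg_and_pos_of_forall_roots_re_neg,
    fun ⟨ht, hd⟩ _ => Complex.re_neg_of_sq_sub_mul_add_eq_zero ht hd⟩

end Matrix

theorem dfe_linearization_stability_general
    (B βmh βhm μh ηh μm φ μA ηA k Nh : ℝ)
    (hμh : 0 < μh)
    (hηh : 0 < ηh) (hμm : 0 < μm) (hφ : 0 < φ)
    (hηA : 0 < ηA) (hNh : 0 < Nh) :
    let Sm : ℝ := (ηA / μm) * (1 - (ηA + μA) * μm / (φ * ηA)) * k * Nh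
    let R0 : ℝ := Real.sqrt (k * B ^ 2 * βhm * βmh *
      (φ * ηA - ηA * μm - μA * μm) / (φ * (ηh + μh) * μm ^ 2))
    let J : Matrix (Fin 2) (Fin 2) ℝ :=
      ![![-(ηh + μh), B * βmh], ![B * βhm * Sm / Nh, -μm]]
    J.trace < 0 ∧
    (J.det > 0 ↔ R0 < 1) ∧
    ((∀ z : ℂ, (J.map (fun x : ℝ => (x : ℂ))).charpoly.IsRoot z → z.re < 0)
      ↔ R0 < 1) := by
  intro Sm R0 J
  set ρ := k * B ^ 2 * βhm * βmh * (φ * ηA - ηA * μm - μA * μm) / (φ * (ηh + μh) * μm ^ 2)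
  have htrace : J.trace < 0 := by
    rw [Matrix.trace_fin_two]
    simp only [J, Matrix.cons_val', Matrix.cons_val_zero, Matrix.cons_val_one,
      Matrix.cons_val_fin_one]
    linarith
  have hdet : J.det = (ηh + μh) * μm * (1 - ρ) := by
    rw [Matrix.det_fin_two]
    simp only [J, Sm, ρ, Matrix.cons_val', Matrix.cons_val_zero, Matrix.cons_val_one,
      Matrix.cons_val_fin_one]
    field_simp
    ring
  have hdet_pos : J.det > 0 ↔ R0 < 1 := by
    rw [gt_iff_lt, hdet, mul_pos_iff_of_pos_left (by positivity), sub_pos,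
      Real.sqrt_lt' one_pos, one_pow]
  refine ⟨htrace, hdet_pos, ?_⟩
  rw [Matrix.forall_charpoly_roots_re_neg_iff_fin_two, ← hdet_pos]
  exact and_iff_right htrace

/-- For the linearization `J` of the infected subsystem at the disease-free
equilibrium: `trace J < 0` always, `det J > 0 ↔ R₀ < 1`, and hence all roots
of the characteristic polynomial of `J` have negative real part iff `R₀ < 1`. -/
theorem dfe_linearization_stability
    (B βmh βhm μh ηh μm φ μA ηA k Nh : ℝ)
    (hB : 0 < B) (hβmh : 0 < βmh) (hβhm : 0 < βhm) (hμh : 0 < μh)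
    (hηh : 0 < ηh) (hμm : 0 < μm) (hφ : 0 < φ) (hμA : 0 < μA)
    (hηA : 0 < ηA) (hk : 0 < k) (hNh : 0 < Nh)
    (hcond : φ * ηA > (ηA + μA) * μm) :
    let Sm : ℝ := (ηA / μm) * (1 - (ηA + μA) * μm / (φ * ηA)) * k * Nh
    let R0 : ℝ := Real.sqrt (k * B ^ 2 * βhm * βmh *
      (φ * ηA - ηA * μm - μA * μm) / (φ * (ηh + μh) * μm ^ 2))
    let J : Matrix (Fin 2) (Fin 2) ℝ :=
      ![![-(ηh + μh), B * βmh], ![B * βhm * Sm / Nh, -μm]]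
    J.trace < 0 ∧
    (J.det > 0 ↔ R0 < 1) ∧
    ((∀ z : ℂ, (J.map (fun x : ℝ => (x : ℂ))).charpoly.IsRoot z → z.re < 0)
      ↔ R0 < 1) :=
  dfe_linearization_stability_general B βmh βhm μh ηh μm φ μA ηA k Nh hμh hηh hμm hφ hηA hNh
end
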